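/- Let E be a real Banach space and let μ, ν be Radon probability measures on B_{E*} (with the weak* topology) having the same barycenter x₀*, and assume ‖x₀*‖ = 1. If ∫ p dμ ≤ ∫ p dν for every weak* continuous sublinear function p : E* → ℝ, then μ ≺ ν in the Choquet order, i.e. ∫ k dμ ≤ ∫ k dν for every weak* continuous convex function k : B_{E*} → ℝ. -/

import Mathlib

open MeasureTheory
open scoped ENNReal

noncomputable section

/-- The closed unit ball of the dual of a real Banach space `E`, equipped with the weak*
topology. -/
abbrev DualBall (E : Type*) [NormedAddCommGroup E] [NormedSpace ℝ E] :=
  {φ : WeakDual ℝ E // ‖WeakDual.toStrongDual φ‖ ≤ 1}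

/-- The Borel σ-algebra on `B_{E*}`. -/
instance ballBorelMeasurableSpace (E : Type*) [NormedAddCommGroup E] [NormedSpace ℝ E] :
    MeasurableSpace (DualBall E) := borel _

instance (E : Type*) [NormedAddCommGroup E] [NormedSpace ℝ E] :
    BorelSpace (DualBall E) := ⟨rfl⟩

/-! A continuous convex `k` on the compact convex ball is, up to `ε`, the maximum `h` of finitely
many weak* continuous affine functions `ℓᵢ + cᵢ`. Since `‖x₀*‖ = 1` we can pick `u` in the unit ball
of `E` with `x₀*(u)` close to `1`, and replace each constant `cᵢ` by `cᵢ φ(u)`: the maximum `p` of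
the functionals `ℓᵢ + cᵢ φ(u)` is weak* continuous and sublinear, and on the ball
`|h φ - p φ| ≤ C (1 - φ(u))` with `C = maxᵢ |cᵢ|`. Both measures integrate `1 - φ(u)` to
`1 - x₀*(u)`, so `∫ k dμ ≈ ∫ p dμ ≤ ∫ p dν ≈ ∫ k dν` up to an arbitrarily small error. -/

open Finset

structure IsSublinear {X : Type*} [AddCommGroup X] [Module ℝ X] (p : X → ℝ) : Prop where
  map_smul_of_nonneg : ∀ c : ℝ, 0 ≤ c → ∀ x, p (c • x) = c * p x
  map_add_le : ∀ x y, p (x + y) ≤ p x + p y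

theorem IsSublinear.finset_sup' {X ι : Type*} [AddCommGroup X] [Module ℝ X] {A : Finset ι}
    (hA : A.Nonempty) {f : ι → X → ℝ} (hf : ∀ i ∈ A, IsSublinear (f i)) :
    IsSublinear fun x => A.sup' hA fun i => f i x where
  map_smul_of_nonneg c hc x := by
    rw [mul₀_sup' hc]
    exact sup'_congr hA rfl fun i hi => (hf i hi).map_smul_of_nonneg c hc x
  map_add_le x y := sup'_le _ _ fun i hi =>
    ((hf i hi).map_add_le x y).trans (add_le_add (le_sup' (f · x) hi) (le_sup' (f · y) hi))

theorem Finset.abs_sup'_sub_sup'_le {ι : Type*} {A : Finset ι} (hA : A.Nonempty) {f g : ι → ℝ}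
    {d : ℝ} (h : ∀ i ∈ A, |f i - g i| ≤ d) : |A.sup' hA f - A.sup' hA g| ≤ d := by
  refine abs_sub_le_iff.2 ⟨?_, ?_⟩ <;> rw [sub_le_iff_le_add', sup'_add]
  <;> refine sup'_mono_fun fun i hi => ?_
  · linarith [(abs_sub_le_iff.1 (h i hi)).1]
  · linarith [(abs_sub_le_iff.1 (h i hi)).2]

theorem ConvexOn.exists_finset_affine_le_lt_add {X : Type*} [TopologicalSpace X] [AddCommGroup X]
    [Module ℝ X] [IsTopologicalAddGroup X] [ContinuousSMul ℝ X] [LocallyConvexSpace ℝ X]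
    [T2Space X] {s : Set X} {f : X → ℝ} (hs : IsCompact s) (hfc : ContinuousOn f s)
    (hf : ConvexOn ℝ s f) {ε : ℝ} (hε : 0 < ε) :
    ∃ A : Finset ((X →L[ℝ] ℝ) × ℝ), (∀ a ∈ A, ∀ x ∈ s, a.1 x + a.2 ≤ f x) ∧
      ∀ x ∈ s, ∃ a ∈ A, f x < a.1 x + a.2 + ε := by
  classical
  have supporting : ∀ x ∈ s, ∃ a : (X →L[ℝ] ℝ) × ℝ,
      (∀ y ∈ s, a.1 y + a.2 ≤ f y) ∧ a.1 x + a.2 = f x - ε / 2 := by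
    intro x hx
    obtain ⟨l, c, hle, heq⟩ := hf.exists_affine_le_of_lt (𝕜 := ℝ) hx (sub_lt_self _ (half_pos hε))
      hs.isClosed hfc.lowerSemicontinuousOn
    exact ⟨(l, c), fun y hy => hle ⟨y, hy⟩, heq⟩
  choose! a ha_le ha_eq using supporting
  obtain ⟨t, hts, hcover⟩ := hs.elim_nhdsWithin_subcover
    (fun x => {y | f y < (a x).1 y + (a x).2 + ε}) fun x hx =>
      (hfc x hx).eventually_lt (((a x).1.continuous.add continuous_const).add
        continuous_const).continuousWithinAt (by simp only [Pi.add_apply]; linarith [ha_eq x hx])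
  refine ⟨t.image a, ?_, fun x hx => ?_⟩
  · simpa using fun y hy => ha_le y (hts y hy)
  · obtain ⟨y, hyt, hy⟩ := Set.mem_iUnion₂.1 (hcover hx)
    exact ⟨a y, mem_image_of_mem a hyt, hy⟩

theorem ContinuousLinearMap.exists_norm_le_one_lt_apply {E : Type*} [NormedAddCommGroup E]
    [NormedSpace ℝ E] (f : StrongDual ℝ E) {r : ℝ} (hr : r < ‖f‖) :
    ∃ u : E, ‖u‖ ≤ 1 ∧ r < f u := by
  obtain ⟨x, hx, hrx⟩ := f.exists_lt_apply_of_lt_opNorm hr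
  rcases lt_abs.1 hrx with h | h
  · exact ⟨x, hx.le, h⟩
  · exact ⟨-x, by simpa using hx.le, by simpa using h⟩

namespace DualBall

variable {E : Type*} [NormedAddCommGroup E] [NormedSpace ℝ E]

instance : LocallyConvexSpace ℝ (WeakDual ℝ E) := WeakBilin.locallyConvexSpace

theorem isCompact : IsCompact {φ : WeakDual ℝ E | ‖WeakDual.toStrongDual φ‖ ≤ 1} := by
  simpa [Metric.closedBall] using WeakDual.isCompact_closedBall (0 : StrongDual ℝ E) 1

theorem convex : Convex ℝ {φ : WeakDual ℝ E | ‖WeakDual.toStrongDual φ‖ ≤ 1} := by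
  simpa [Metric.closedBall] using
    (convex_closedBall (0 : StrongDual ℝ E) 1).linear_preimage WeakDual.toStrongDual.toLinearMap

instance : CompactSpace (DualBall E) := isCompact_iff_compactSpace.1 isCompact

theorem apply_le_one (φ : DualBall E) {u : E} (hu : ‖u‖ ≤ 1) : φ.1 u ≤ 1 :=
  calc φ.1 u ≤ ‖WeakDual.toStrongDual φ.1‖ * ‖u‖ :=
        (le_abs_self _).trans ((WeakDual.toStrongDual φ.1).le_opNorm u)
    _ ≤ 1 := mul_le_one₀ φ.2 (norm_nonneg u) hu

theorem exists_finset_affine_le_lt_add {k : DualBall E → ℝ} (hk : Continuous k)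
    (hconv : ∀ (φ ψ ξ : DualBall E) (a b : ℝ), 0 ≤ a → 0 ≤ b → a + b = 1 →
      (ξ.1 : WeakDual ℝ E) = a • φ.1 + b • ψ.1 → k ξ ≤ a * k φ + b * k ψ)
    {ε : ℝ} (hε : 0 < ε) :
    ∃ A : Finset ((WeakDual ℝ E →L[ℝ] ℝ) × ℝ), A.Nonempty ∧
      (∀ a ∈ A, ∀ φ : DualBall E, a.1 φ.1 + a.2 ≤ k φ) ∧
      ∀ φ : DualBall E, ∃ a ∈ A, k φ < a.1 φ.1 + a.2 + ε := by
  set f := Function.extend Subtype.val k 0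
  have hf : ∀ φ : DualBall E, f φ.1 = k φ := Subtype.val_injective.extend_apply k 0
  have hfc : ContinuousOn f {φ | ‖WeakDual.toStrongDual φ‖ ≤ 1} :=
    continuousOn_iff_continuous_domRestrict.2 ((funext hf).symm ▸ hk :)
  have hfconv : ConvexOn ℝ {φ | ‖WeakDual.toStrongDual φ‖ ≤ 1} f := by
    refine ⟨convex, fun x hx y hy a b ha hb hab => ?_⟩
    simpa only [smul_eq_mul, ← hf] using
      hconv ⟨x, hx⟩ ⟨y, hy⟩ ⟨a • x + b • y, convex hx hy ha hb hab⟩ a b ha hb hab rfl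
  obtain ⟨A, hle, hlt⟩ := hfconv.exists_finset_affine_le_lt_add isCompact hfc hε
  obtain ⟨a, ha, -⟩ := hlt 0 (by simp)
  exact ⟨A, ⟨a, ha⟩, fun a ha φ => hf φ ▸ hle a ha φ.1 φ.2, fun φ => hf φ ▸ hlt φ.1 φ.2⟩

theorem integral_le_of_le_add_mul_one_sub_apply (ρ : Measure (DualBall E)) [IsProbabilityMeasure ρ]
    {x₀ : WeakDual ℝ E} {u : E} (hbary : x₀ u = ∫ φ, (φ : DualBall E).1 u ∂ρ)
    {F G : DualBall E → ℝ} (hF : Continuous F) (hG : Continuous G) {C η : ℝ}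
    (hle : ∀ φ, F φ ≤ G φ + C * (1 - φ.1 u) + η) :
    ∫ φ, F φ ∂ρ ≤ ∫ φ, G φ ∂ρ + C * (1 - x₀ u) + η := by
  have hint {f : DualBall E → ℝ} (hf : Continuous f) : Integrable f ρ :=
    hf.integrable_of_hasCompactSupport (.of_compactSpace f)
  have hu : Continuous fun φ : DualBall E => φ.1 u :=
    (WeakDual.eval_continuous u).comp continuous_subtype_val
  calc ∫ φ, F φ ∂ρ ≤ ∫ φ, (G φ + C * (1 - φ.1 u) + η) ∂ρ :=
        integral_mono (hint hF) (hint (by fun_prop)) hle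
    _ = ∫ φ, G φ ∂ρ + C * (1 - x₀ u) + η := by
      rw [integral_add (hint (by fun_prop)) (integrable_const η),
        integral_add (hint hG) (hint (by fun_prop)), integral_const_mul,
        integral_sub (integrable_const 1) (hint hu), hbary]
      simp

section Homogenization

def homogenizedSup (A : Finset ((WeakDual ℝ E →L[ℝ] ℝ) × ℝ)) (hA : A.Nonempty) (u : E)
    (w : WeakDual ℝ E) : ℝ :=
  A.sup' hA fun a => a.1 w + a.2 * w u

variable {A : Finset ((WeakDual ℝ E →L[ℝ] ℝ) × ℝ)} (hA : A.Nonempty)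

theorem continuous_homogenizedSup (u : E) : Continuous (homogenizedSup A hA u) :=
  Continuous.finset_sup'_apply hA fun a _ =>
    a.1.continuous.add (continuous_const.mul (WeakDual.eval_continuous u))

theorem isSublinear_homogenizedSup (u : E) : IsSublinear (homogenizedSup A hA u) :=
  IsSublinear.finset_sup' hA fun a _ =>
    { map_smul_of_nonneg := fun c _ w => by
        change a.1 (c • w) + a.2 * (c * w u) = c * (a.1 w + a.2 * w u)
        rw [map_smul, smul_eq_mul]
        ring
      map_add_le := fun w w' => by
        change a.1 (w + w') + a.2 * (w u + w' u) ≤ _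
        rw [map_add]
        linarith }

theorem abs_sup'_sub_homogenizedSup_le (φ : DualBall E) {u : E} (hu : ‖u‖ ≤ 1) :
    |A.sup' hA (fun a => a.1 φ.1 + a.2) - homogenizedSup A hA u φ.1| ≤
      A.sup' hA (fun a => |a.2|) * (1 - φ.1 u) :=
  abs_sup'_sub_sup'_le hA fun a ha => by
    have hφu := sub_nonneg.2 (apply_le_one φ hu)
    calc |a.1 φ.1 + a.2 - (a.1 φ.1 + a.2 * φ.1 u)| = |a.2| * (1 - φ.1 u) := by
          rw [← abs_of_nonneg hφu, ← abs_mul]; ring_nf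
      _ ≤ _ := mul_le_mul_of_nonneg_right (le_sup' (fun a => |a.2|) ha) hφu

end Homogenization

theorem exists_isSublinear_approx {k : DualBall E → ℝ} (hk : Continuous k)
    (hconv : ∀ (φ ψ ξ : DualBall E) (a b : ℝ), 0 ≤ a → 0 ≤ b → a + b = 1 →
      (ξ.1 : WeakDual ℝ E) = a • φ.1 + b • ψ.1 → k ξ ≤ a * k φ + b * k ψ)
    {x₀ : WeakDual ℝ E} (hx₀ : 1 ≤ ‖WeakDual.toStrongDual x₀‖) {ε : ℝ} (hε : 0 < ε) :
    ∃ (p : WeakDual ℝ E → ℝ) (u : E) (C : ℝ), Continuous p ∧ IsSublinear p ∧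
      C * (1 - x₀ u) ≤ ε ∧
      ∀ φ : DualBall E, k φ ≤ p φ.1 + C * (1 - φ.1 u) + ε ∧ p φ.1 ≤ k φ + C * (1 - φ.1 u) := by
  obtain ⟨A, hA, hle, hlt⟩ := exists_finset_affine_le_lt_add hk hconv hε
  set C := A.sup' hA fun a => |a.2|
  have hC : 0 ≤ C := (abs_nonneg _).trans (le_sup' (fun a => |a.2|) hA.choose_spec)
  have hδ : 0 < ε / (C + 1) := by positivity
  obtain ⟨u, hu, hxu⟩ :=
    (WeakDual.toStrongDual x₀).exists_norm_le_one_lt_apply (r := 1 - ε / (C + 1)) (by linarith)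
  change 1 - ε / (C + 1) < x₀ u at hxu
  refine ⟨homogenizedSup A hA u, u, C, continuous_homogenizedSup hA u,
    isSublinear_homogenizedSup hA u, ?_, fun φ => ?_⟩
  · calc C * (1 - x₀ u) ≤ C * (ε / (C + 1)) :=
          mul_le_mul_of_nonneg_left (by linarith) hC
      _ ≤ ε := by rw [mul_div_assoc', div_le_iff₀ (by positivity)]; linarith
  · have hsup_le : A.sup' hA (fun a => a.1 φ.1 + a.2) ≤ k φ := sup'_le _ _ fun a ha => hle a ha φ
    obtain ⟨a, ha, hka⟩ := hlt φ
    have hk_lt : k φ < A.sup' hA (fun a => a.1 φ.1 + a.2) + ε := by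
      linarith [le_sup' (fun a => a.1 φ.1 + a.2) ha]
    have := abs_le.1 (abs_sup'_sub_homogenizedSup_le hA φ hu)
    constructor <;> linarith

end DualBall

theorem choquet_le_of_sublinear_test_general
    (E : Type*) [NormedAddCommGroup E] [NormedSpace ℝ E]
    (μ ν : Measure (DualBall E)) [IsProbabilityMeasure μ] [IsProbabilityMeasure ν]
    (x₀ : WeakDual ℝ E) (hx₀ : ‖WeakDual.toStrongDual x₀‖ = 1)
    (hbaryμ : ∀ x : E, x₀ x = ∫ φ, (φ : DualBall E).1 x ∂μ)
    (hbaryν : ∀ x : E, x₀ x = ∫ φ, (φ : DualBall E).1 x ∂ν)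
    (hsub : ∀ p : WeakDual ℝ E → ℝ, Continuous p →
      (∀ c : ℝ, 0 ≤ c → ∀ φ : WeakDual ℝ E, p (c • φ) = c * p φ) →
      (∀ φ ψ : WeakDual ℝ E, p (φ + ψ) ≤ p φ + p ψ) →
      ∫ φ, p (φ : DualBall E).1 ∂μ ≤ ∫ φ, p (φ : DualBall E).1 ∂ν) :
    ∀ k : DualBall E → ℝ, Continuous k →
      (∀ (φ ψ ξ : DualBall E) (a b : ℝ), 0 ≤ a → 0 ≤ b → a + b = 1 →
        (ξ.1 : WeakDual ℝ E) = a • φ.1 + b • ψ.1 →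
        k ξ ≤ a * k φ + b * k ψ) →
      ∫ φ, k φ ∂μ ≤ ∫ φ, k φ ∂ν := by
  intro k hk hconv
  refine le_of_forall_pos_le_add fun ε hε => ?_
  obtain ⟨p, u, C, hpc, hp, hCu, hkp⟩ :=
    DualBall.exists_isSublinear_approx hk hconv hx₀.ge (ε := ε / 3) (by positivity)
  have hpc' : Continuous fun φ : DualBall E => p φ.1 := hpc.comp continuous_subtype_val
  have hμ := DualBall.integral_le_of_le_add_mul_one_sub_apply μ (hbaryμ u) hk hpc'
    fun φ => (hkp φ).1
  have hν := DualBall.integral_le_of_le_add_mul_one_sub_apply ν (hbaryν u) hpc' hk (η := 0)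
    fun φ => (hkp φ).2.trans_eq (add_zero _).symm
  have := hsub p hpc hp.map_smul_of_nonneg hp.map_add_le
  linarith

/-- Let `μ, ν` be Radon probability measures on `B_{E*}` with the same
barycenter `x₀*` of norm one.  If `∫ p dμ ≤ ∫ p dν` for every weak* continuous sublinear
`p : E* → ℝ`, then `μ ≺ ν` in the Choquet order: `∫ k dμ ≤ ∫ k dν` for every weak* continuous
convex `k : B_{E*} → ℝ`. -/
theorem choquet_le_of_sublinear_test
    (E : Type*) [NormedAddCommGroup E] [NormedSpace ℝ E] [CompleteSpace E]
    (μ ν : Measure (DualBall E)) [IsProbabilityMeasure μ] [IsProbabilityMeasure ν]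
    [μ.Regular] [ν.Regular]
    (x₀ : WeakDual ℝ E) (hx₀ : ‖WeakDual.toStrongDual x₀‖ = 1)
    (hbaryμ : ∀ x : E, x₀ x = ∫ φ, (φ : DualBall E).1 x ∂μ)
    (hbaryν : ∀ x : E, x₀ x = ∫ φ, (φ : DualBall E).1 x ∂ν)
    (hsub : ∀ p : WeakDual ℝ E → ℝ, Continuous p →
      (∀ c : ℝ, 0 ≤ c → ∀ φ : WeakDual ℝ E, p (c • φ) = c * p φ) →
      (∀ φ ψ : WeakDual ℝ E, p (φ + ψ) ≤ p φ + p ψ) →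
      ∫ φ, p (φ : DualBall E).1 ∂μ ≤ ∫ φ, p (φ : DualBall E).1 ∂ν) :
    ∀ k : DualBall E → ℝ, Continuous k →
      (∀ (φ ψ ξ : DualBall E) (a b : ℝ), 0 ≤ a → 0 ≤ b → a + b = 1 →
        (ξ.1 : WeakDual ℝ E) = a • φ.1 + b • ψ.1 →
        k ξ ≤ a * k φ + b * k ψ) →
      ∫ φ, k φ ∂μ ≤ ∫ φ, k φ ∂ν :=
  choquet_le_of_sublinear_test_general E μ ν x₀ hx₀ hbaryμ hbaryν hsub
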